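/- For 1<q<p and f,A,F>0 satisfying f^q < A < f^{(p-q)/(p-1)} F^{(q-1)/(p-1)}: if there exists κ ∈ ((f^q/A)^{1/(q-1)}, 1) with ω_q(f^q/(κ^{q-1}A)) = ω_p(f^p/(κ^{p-1}F)), then ω_q(f^q/A) > ω_p(f^p/F). -/

import Mathlib

open Real Set

/-!
Put `u = ω_q(f^q/A)`, `w = ω_q(f^q/(κ^(q-1)A)) = ω_p(f^p/(κ^(p-1)F))` and `v = ω_p(f^p/F)`, so that
`H_q u = κ^(q-1) H_q w` and `H_p v = κ^(p-1) H_p w`. As `κ < 1` and `H_q` decreases on `[1, ∞)`,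
`w < u`. Since `H_r z = z^(r-1) (r - (r-1) z)`, the powers of `z` cancel in
`(q-1) log H_p - (p-1) log H_q`, which is therefore decreasing on `[1, p/(p-1))`, because
`0 < p - (p-1) z < q - (q-1) z` there. Comparing its values at `w` and `u` gives
`H_p u < κ^(p-1) H_p w = H_p v`, hence `v < u`; if `u ≥ p/(p-1)` then already `v < p/(p-1) ≤ u`.
-/

noncomputable def H (r z : ℝ) : ℝ := r * z ^ (r - 1) - (r - 1) * z ^ r

lemma H_eq_rpow_mul {r z : ℝ} (hz : 0 < z) : H r z = z ^ (r - 1) * (r - (r - 1) * z) := by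
  rw [H, rpow_sub_one hz.ne']
  field_simp

lemma H_pos {r z : ℝ} (hz : 0 < z) (ha : 0 < r - (r - 1) * z) : 0 < H r z := by
  rw [H_eq_rpow_mul hz]
  positivity

lemma H_pos_iff {r z : ℝ} (hr : 1 < r) (hz : 0 < z) : 0 < H r z ↔ z < r / (r - 1) := by
  rw [H_eq_rpow_mul hz, mul_pos_iff_of_pos_left (rpow_pos_of_pos hz _),
    lt_div_iff₀ (sub_pos.2 hr)]
  constructor <;> intro h <;> linarith

lemma hasDerivAt_H (r : ℝ) {z : ℝ} (hz : 0 < z) :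
    HasDerivAt (H r) (r * (r - 1) * z ^ (r - 2) * (1 - z)) z := by
  have h₁ : HasDerivAt (fun z : ℝ => z ^ (r - 1)) ((r - 1) * z ^ (r - 2)) z := by
    simpa [show r - 1 - 1 = r - 2 by ring] using hasDerivAt_rpow_const (p := r - 1) (Or.inl hz.ne')
  have h₂ : HasDerivAt (fun z : ℝ => z ^ r) (r * z ^ (r - 1)) z :=
    hasDerivAt_rpow_const (Or.inl hz.ne')
  refine ((h₁.const_mul r).sub (h₂.const_mul (r - 1))).congr_deriv ?_
  rw [show r - 1 = r - 2 + 1 by ring, rpow_add_one hz.ne']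
  ring

lemma H_strictAntiOn {r : ℝ} (hr : 1 < r) : StrictAntiOn (H r) (Ici 1) := by
  have hderiv : ∀ z ∈ Ici (1 : ℝ), HasDerivAt (H r) (r * (r - 1) * z ^ (r - 2) * (1 - z)) z :=
    fun z hz => hasDerivAt_H r (zero_lt_one.trans_le hz)
  refine strictAntiOn_of_hasDerivWithinAt_neg (convex_Ici 1)
    (fun z hz => (hderiv z hz).continuousAt.continuousWithinAt)
    (fun z hz => (hderiv z (interior_subset hz)).hasDerivWithinAt) fun z hz => ?_
  rw [interior_Ici, mem_Ioi] at hz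
  have hr₁ : 0 < r - 1 := sub_pos.2 hr
  have hz₀ : 0 < z ^ (r - 2) := rpow_pos_of_pos (zero_lt_one.trans hz) (r - 2)
  exact mul_neg_of_pos_of_neg (by positivity) (by linarith)

lemma log_H {r z : ℝ} (hz : 0 < z) (ha : 0 < r - (r - 1) * z) :
    log (H r z) = (r - 1) * log z + log (r - (r - 1) * z) := by
  rw [H_eq_rpow_mul hz, log_mul (rpow_pos_of_pos hz _).ne' ha.ne', log_rpow hz]

lemma strictAntiOn_mul_log_sub_mul_log {p q : ℝ} (hq : 1 < q) (hpq : q < p) :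
    StrictAntiOn (fun z => (q - 1) * log (p - (p - 1) * z) - (p - 1) * log (q - (q - 1) * z))
      (Ico 1 (p / (p - 1))) := by
  have hp₁ : 0 < p - 1 := by linarith
  have hpos : ∀ z ∈ Ico 1 (p / (p - 1)), 0 < p - (p - 1) * z ∧ 0 < q - (q - 1) * z := by
    rintro z ⟨hz₁, hz₂⟩
    rw [lt_div_iff₀ hp₁] at hz₂
    constructor <;> nlinarith
  have hderiv : ∀ z ∈ Ico 1 (p / (p - 1)), HasDerivAt
      (fun z => (q - 1) * log (p - (p - 1) * z) - (p - 1) * log (q - (q - 1) * z))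
      ((p - 1) * (q - 1) * (1 / (q - (q - 1) * z) - 1 / (p - (p - 1) * z))) z := by
    intro z hz
    have ha := ((hasDerivAt_id z).const_mul (p - 1)).const_sub p |>.log (hpos z hz).1.ne'
    have hb := ((hasDerivAt_id z).const_mul (q - 1)).const_sub q |>.log (hpos z hz).2.ne'
    refine ((ha.const_mul (q - 1)).sub (hb.const_mul (p - 1))).congr_deriv ?_
    simp only [id]
    ring
  refine strictAntiOn_of_hasDerivWithinAt_neg (convex_Ico _ _)
    (fun z hz => (hderiv z hz).continuousAt.continuousWithinAt)
    (fun z hz => (hderiv z (interior_subset hz)).hasDerivWithinAt) fun z hz => ?_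
  obtain ⟨ha, -⟩ := hpos z (interior_subset hz)
  rw [interior_Ico] at hz
  have hab : p - (p - 1) * z < q - (q - 1) * z := by nlinarith [hz.1]
  have hq₁ : 0 < q - 1 := by linarith
  exact mul_neg_of_pos_of_neg (by positivity) (sub_neg.2 (one_div_lt_one_div_of_lt ha hab))

lemma H_lt_rpow_mul_H {p q w u κ : ℝ} (hq : 1 < q) (hpq : q < p) (hw : 1 ≤ w) (hwu : w < u)
    (hu : u < p / (p - 1)) (hκ : 0 < κ) (h : H q u = κ ^ (q - 1) * H q w) :
    H p u < κ ^ (p - 1) * H p w := by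
  have hp₁ : 0 < p - 1 := by linarith
  have hw₀ : 0 < w := zero_lt_one.trans_le hw
  have hu₀ : 0 < u := hw₀.trans hwu
  have hw' : w < p / (p - 1) := hwu.trans hu
  have hau : 0 < p - (p - 1) * u := by rw [lt_div_iff₀ hp₁] at hu; linarith
  have haw : 0 < p - (p - 1) * w := by rw [lt_div_iff₀ hp₁] at hw'; linarith
  have hbu : 0 < q - (q - 1) * u := by nlinarith
  have hbw : 0 < q - (q - 1) * w := by nlinarith
  have hM := strictAntiOn_mul_log_sub_mul_log hq hpq ⟨hw, hw'⟩ ⟨hw.trans hwu.le, hu⟩ hwu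
  have hlog := congrArg log h
  rw [log_mul (rpow_pos_of_pos hκ _).ne' (H_pos hw₀ hbw).ne', log_rpow hκ, log_H hu₀ hbu,
    log_H hw₀ hbw] at hlog
  rw [← log_lt_log_iff (H_pos hu₀ hau) (mul_pos (rpow_pos_of_pos hκ _) (H_pos hw₀ haw)),
    log_mul (rpow_pos_of_pos hκ _).ne' (H_pos hw₀ haw).ne', log_rpow hκ, log_H hu₀ hau,
    log_H hw₀ haw]
  refine lt_of_mul_lt_mul_left ?_ (sub_pos.2 hq).le
  linear_combination hM + (p - 1) * hlog

lemma div_lt_rpow_of_lt_mul_rpow {p q f A F κ : ℝ} (hq : 1 < q) (hpq : q < p) (hf : 0 < f)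
    (hA : 0 < A) (hF : 0 < F) (hκ : 0 < κ)
    (hA' : A < f ^ ((p - q) / (p - 1)) * F ^ ((q - 1) / (p - 1)))
    (hs : f ^ q / A < κ ^ (q - 1)) : f ^ p / F < κ ^ (p - 1) := by
  have hp₁ : 0 < p - 1 := by linarith
  rw [← log_lt_log_iff hA (by positivity), log_mul (by positivity) (by positivity),
    log_rpow hf, log_rpow hF] at hA'
  rw [← log_lt_log_iff (by positivity) (by positivity), log_div (by positivity) hA.ne',
    log_rpow hf, log_rpow hκ] at hs
  rw [← log_lt_log_iff (by positivity) (by positivity), log_div (by positivity) hF.ne',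
    log_rpow hf, log_rpow hκ]
  have hA'' : (p - 1) * log A < (p - q) * log f + (q - 1) * log F := by
    have := mul_lt_mul_of_pos_left hA' hp₁
    field_simp at this
    linarith
  refine lt_of_mul_lt_mul_left ?_ (sub_pos.2 hq).le
  linear_combination (p - 1) * hs + hA''

theorem omega_ineq_of_exists_kappa_general (p q : ℝ) (hq : 1 < q) (hpq : q < p)
    (ωp ωq : ℝ → ℝ)
    (hωp : ∀ s ∈ Icc (0 : ℝ) 1, ωp s ∈ Icc 1 (p / (p - 1)) ∧
      p * ωp s ^ (p - 1) - (p - 1) * ωp s ^ p = s)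
    (hωq : ∀ s ∈ Icc (0 : ℝ) 1, ωq s ∈ Icc 1 (q / (q - 1)) ∧
      q * ωq s ^ (q - 1) - (q - 1) * ωq s ^ q = s)
    (f A F : ℝ) (hf : 0 < f) (hA : 0 < A) (hF : 0 < F)
    (h2 : A < f ^ ((p - q) / (p - 1)) * F ^ ((q - 1) / (p - 1)))
    (h3 : ∃ κ ∈ Ioo ((f ^ q / A) ^ (1 / (q - 1))) (1 : ℝ),
      ωq (f ^ q / (κ ^ (q - 1) * A)) = ωp (f ^ p / (κ ^ (p - 1) * F))) :
    ωq (f ^ q / A) > ωp (f ^ p / F) := by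
  obtain ⟨κ, ⟨hκ_lo, hκ_lt_one⟩, hω⟩ := h3
  have hp : 1 < p := hq.trans hpq
  have hs₀ : 0 < f ^ q / A := by positivity
  have ht₀ : 0 < f ^ p / F := by positivity
  have hκ : 0 < κ := (rpow_nonneg hs₀.le _).trans_lt hκ_lo
  have hκq : κ ^ (q - 1) < 1 := rpow_lt_one hκ.le hκ_lt_one (sub_pos.2 hq)
  have hκp : κ ^ (p - 1) < 1 := rpow_lt_one hκ.le hκ_lt_one (sub_pos.2 hp)
  have hs : f ^ q / A < κ ^ (q - 1) := by
    rwa [one_div, rpow_inv_lt_iff_of_pos hs₀.le hκ.le (sub_pos.2 hq)] at hκ_lo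
  have ht : f ^ p / F < κ ^ (p - 1) := div_lt_rpow_of_lt_mul_rpow hq hpq hf hA hF hκ h2 hs
  rw [div_mul_eq_div_div_swap, div_mul_eq_div_div_swap] at hω
  obtain ⟨⟨hu, -⟩, hHu⟩ := hωq _ ⟨hs₀.le, (hs.trans hκq).le⟩
  obtain ⟨-, hHwq⟩ := hωq _ (unitInterval.div_mem hs₀.le (hs₀.trans hs).le hs.le)
  obtain ⟨⟨hw, -⟩, hHwp⟩ := hωp _ (unitInterval.div_mem ht₀.le (ht₀.trans ht).le ht.le)
  obtain ⟨⟨hv, -⟩, hHv⟩ := hωp _ ⟨ht₀.le, (ht.trans hκp).le⟩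
  rw [hω] at hHwq
  set u := ωq (f ^ q / A)
  set w := ωp (f ^ p / F / κ ^ (p - 1))
  set v := ωp (f ^ p / F)
  have hq_eq : H q u = κ ^ (q - 1) * H q w := by
    rw [H, H, hHu, hHwq, mul_div_cancel₀ _ (hs₀.trans hs).ne']
  have hp_eq : H p v = κ ^ (p - 1) * H p w := by
    rw [H, H, hHv, hHwp, mul_div_cancel₀ _ (ht₀.trans ht).ne']
  have hwu : w < u := by
    refine ((H_strictAntiOn hq).lt_iff_gt hu hw).1 ?_
    rw [hq_eq]
    exact mul_lt_of_lt_one_left (by rw [H, hHwq]; positivity) hκq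
  rcases lt_or_ge u (p / (p - 1)) with hu' | hu'
  · exact ((H_strictAntiOn hp).lt_iff_gt hu hv).1
      (hp_eq ▸ H_lt_rpow_mul_H hq hpq hw hwu hu' hκ hq_eq)
  · exact ((H_pos_iff hp (zero_lt_one.trans_le hv)).1 (by rwa [H, hHv])).trans_le hu'

/-- For `1 < q < p` and `f, A, F > 0` with `f^q < A < f^((p-q)/(p-1)) F^((q-1)/(p-1))`:
if there exists `κ ∈ ((f^q/A)^(1/(q-1)), 1)` with
`ω_q(f^q/(κ^(q-1)A)) = ω_p(f^p/(κ^(p-1)F))`, then `ω_q(f^q/A) > ω_p(f^p/F)`. -/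
theorem omega_ineq_of_exists_kappa (p q : ℝ) (hq : 1 < q) (hpq : q < p)
    (ωp ωq : ℝ → ℝ)
    (hωp : ∀ s ∈ Icc (0 : ℝ) 1, ωp s ∈ Icc 1 (p / (p - 1)) ∧
      p * ωp s ^ (p - 1) - (p - 1) * ωp s ^ p = s)
    (hωq : ∀ s ∈ Icc (0 : ℝ) 1, ωq s ∈ Icc 1 (q / (q - 1)) ∧
      q * ωq s ^ (q - 1) - (q - 1) * ωq s ^ q = s)
    (f A F : ℝ) (hf : 0 < f) (hA : 0 < A) (hF : 0 < F)
    (h1 : f ^ q < A) (h2 : A < f ^ ((p - q) / (p - 1)) * F ^ ((q - 1) / (p - 1)))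
    (h3 : ∃ κ ∈ Ioo ((f ^ q / A) ^ (1 / (q - 1))) (1 : ℝ),
      ωq (f ^ q / (κ ^ (q - 1) * A)) = ωp (f ^ p / (κ ^ (p - 1) * F))) :
    ωq (f ^ q / A) > ωp (f ^ p / F) :=
  omega_ineq_of_exists_kappa_general p q hq hpq ωp ωq hωp hωq f A F hf hA hF h2 h3
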